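/- arXiv:1401.5166 — 3 statements merged into one kernel-verified Lean document; each statement's English description precedes it below -/
import Mathlib

section
/- Let p>1, δ>1, Q≥2, q<0. Suppose F is a continuous real-valued function on Ω_ε := {(x,y): x>0, x^p ≤ y ≤ ε^p x^p} satisfying: (a) F(c, c^p) ≥ c^q for every c>0; and (b) for every weight w ∈ RH_p^{δ,d}(J) with Db^d(w) ≤ Q and every dyadic interval I ∈ D(J) with children I^±, F(⟨w⟩_I, ⟨w^p⟩_I) ≥ (1/2)·[F(⟨w⟩_{I^+}, ⟨w^p⟩_{I^+}) + F(⟨w⟩_{I^-}, ⟨w^p⟩_{I^-})]. Then for every weight w ∈ RH_p^{δ,d}(J) with Db^d(w) ≤ Q one has ⟨w^q⟩_J ≤ F(⟨w⟩_J, ⟨w^p⟩_J). -/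
/-!
Replace `w` by its dyadic conditional expectations `wᵢ`, equal on each dyadic interval of length
`2^-(K+i)` to the average of `w` there. Each `wᵢ` is again in `RH_p^{δ,d}(J)` with
`Db^d(wᵢ) ≤ Q`: on coarser intervals its averages are those of `w` and, by Jensen, its `p`-th
power averages are smaller; on finer intervals it is constant. Iterating (b) down to generation `i`
and applying (a) on each interval of that generation gives `⟨wᵢ^q⟩_J ≤ F(⟨w⟩_J, ⟨wᵢ^p⟩_J)`.
By Lebesgue differentiation `wᵢ → w` a.e., so Fatou's lemma gives `⟨wᵢ^p⟩_J → ⟨w^p⟩_J` (these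
averages are bounded by `⟨w^p⟩_J`) and `⟨w^q⟩_J ≤ liminf ⟨wᵢ^q⟩_J`. All points
`(⟨w⟩_J, ⟨wᵢ^p⟩_J)` lie in `Ω_ε` because `δ ≤ ε`, and the continuity of `F` there concludes.
-/

open MeasureTheory Set

/-- The dyadic interval `[n·2^(-k), (n+1)·2^(-k)]`. -/
noncomputable def dIcc (n k : ℕ) : Set ℝ :=
  Set.Icc ((n : ℝ) * 2 ^ (-(k : ℤ))) (((n : ℝ) + 1) * 2 ^ (-(k : ℤ)))

/-- The average `⟨f⟩_I` of `f` over the dyadic interval `I = [n·2^(-k), (n+1)·2^(-k)]`. -/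
noncomputable def avg (f : ℝ → ℝ) (n k : ℕ) : ℝ :=
  (2 : ℝ) ^ (k : ℤ) * ∫ x in dIcc n k, f x

open Filter Topology
open scoped ENNReal

section Fatou

variable {α : Type*} [MeasurableSpace α] {μ : Measure α} {f : ℕ → α → ℝ} {g : α → ℝ}

lemma ofReal_integral_le_liminf_of_tendsto_ae (hf : ∀ n, Integrable (f n) μ)
    (hf_nonneg : ∀ n, 0 ≤ᵐ[μ] f n) (hlim : ∀ᵐ x ∂μ, Tendsto (fun n => f n x) atTop (𝓝 (g x))) :
    ENNReal.ofReal (∫ x, g x ∂μ) ≤ liminf (fun n => ENNReal.ofReal (∫ x, f n x ∂μ)) atTop := by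
  have hg_nonneg : 0 ≤ᵐ[μ] g := by
    filter_upwards [hlim, ae_all_iff.2 hf_nonneg] with x hx hx' using ge_of_tendsto' hx hx'
  rw [integral_eq_lintegral_of_nonneg_ae hg_nonneg
    (aestronglyMeasurable_of_tendsto_ae _ (fun n => (hf n).1) hlim)]
  calc ENNReal.ofReal (∫⁻ x, ENNReal.ofReal (g x) ∂μ).toReal
      ≤ ∫⁻ x, ENNReal.ofReal (g x) ∂μ := ENNReal.ofReal_toReal_le
    _ = ∫⁻ x, liminf (fun n => ENNReal.ofReal (f n x)) atTop ∂μ :=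
      lintegral_congr_ae (hlim.mono fun x hx =>
        ((ENNReal.continuous_ofReal.tendsto _).comp hx).liminf_eq.symm)
    _ ≤ liminf (fun n => ∫⁻ x, ENNReal.ofReal (f n x) ∂μ) atTop :=
      lintegral_liminf_le' fun n => (hf n).1.aemeasurable.ennreal_ofReal
    _ = liminf (fun n => ENNReal.ofReal (∫ x, f n x ∂μ)) atTop := by
      simp_rw [ofReal_integral_eq_lintegral_ofReal (hf _) (hf_nonneg _)]

lemma integral_le_of_tendsto_ae (hf : ∀ n, Integrable (f n) μ) (hf_nonneg : ∀ n, 0 ≤ᵐ[μ] f n)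
    (hlim : ∀ᵐ x ∂μ, Tendsto (fun n => f n x) atTop (𝓝 (g x))) {b : ℕ → ℝ} {c : ℝ}
    (hb : ∀ n, ∫ x, f n x ∂μ ≤ b n) (hbc : Tendsto b atTop (𝓝 c)) : ∫ x, g x ∂μ ≤ c := by
  have hc : 0 ≤ c := ge_of_tendsto' hbc fun n => (integral_nonneg_of_ae (hf_nonneg n)).trans (hb n)
  rw [← ENNReal.ofReal_le_ofReal_iff hc]
  calc ENNReal.ofReal (∫ x, g x ∂μ)
      ≤ liminf (fun n => ENNReal.ofReal (∫ x, f n x ∂μ)) atTop :=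
        ofReal_integral_le_liminf_of_tendsto_ae hf hf_nonneg hlim
    _ ≤ liminf (fun n => ENNReal.ofReal (b n)) atTop :=
        liminf_le_liminf (.of_forall fun n => ENNReal.ofReal_le_ofReal (hb n))
    _ = ENNReal.ofReal c := ((ENNReal.continuous_ofReal.tendsto c).comp hbc).liminf_eq

lemma tendsto_integral_of_tendsto_ae_of_integral_le (hf : ∀ n, Integrable (f n) μ)
    (hf_nonneg : ∀ n, 0 ≤ᵐ[μ] f n) (hlim : ∀ᵐ x ∂μ, Tendsto (fun n => f n x) atTop (𝓝 (g x)))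
    (hle : ∀ n, ∫ x, f n x ∂μ ≤ ∫ x, g x ∂μ) :
    Tendsto (fun n => ∫ x, f n x ∂μ) atTop (𝓝 (∫ x, g x ∂μ)) := by
  have hint_nonneg (n : ℕ) : 0 ≤ ∫ x, f n x ∂μ := integral_nonneg_of_ae (hf_nonneg n)
  have hofReal : Tendsto (fun n => ENNReal.ofReal (∫ x, f n x ∂μ)) atTop
      (𝓝 (ENNReal.ofReal (∫ x, g x ∂μ))) :=
    tendsto_of_le_liminf_of_limsup_le (ofReal_integral_le_liminf_of_tendsto_ae hf hf_nonneg hlim)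
      (limsup_le_of_le (by isBoundedDefault) (.of_forall fun n => ENNReal.ofReal_le_ofReal (hle n)))
  have := (ENNReal.tendsto_toReal ENNReal.ofReal_ne_top).comp hofReal
  rw [ENNReal.toReal_ofReal ((hint_nonneg 0).trans (hle 0))] at this
  exact this.congr fun n => ENNReal.toReal_ofReal (hint_nonneg n)

end Fatou

lemma locallyIntegrable_comp_floor (c : ℕ → ℝ) {s : ℝ} (hs : 0 ≤ s) :
    LocallyIntegrable (fun x : ℝ => c ⌊x * s⌋₊) volume := by
  have hmeas : Measurable (fun x : ℝ => c ⌊x * s⌋₊) :=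
    measurable_from_nat.comp (Nat.measurable_floor.comp (measurable_id.mul_const s))
  refine locallyIntegrable_iff.2 fun K hK => ?_
  obtain ⟨R, hR⟩ := hK.isBounded.subset_closedBall 0
  refine Measure.integrableOn_of_bounded (M := ∑ m ∈ Finset.range (⌊R * s⌋₊ + 1), |c m|)
    hK.measure_lt_top.ne hmeas.aestronglyMeasurable ?_
  filter_upwards [ae_restrict_mem hK.measurableSet] with x hx
  have hxR : x ≤ R := (abs_le.mp (by simpa using hR hx)).2
  refine Finset.single_le_sum (f := fun m => |c m|) (fun m _ => abs_nonneg _) ?_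
  exact Finset.mem_range.mpr (Nat.lt_succ_of_le (Nat.floor_mono (by gcongr)))

lemma sum_range_two_mul (f : ℕ → ℝ) (n : ℕ) :
    ∑ m ∈ Finset.range (2 * n), f m = ∑ m ∈ Finset.range n, (f (2 * m) + f (2 * m + 1)) := by
  induction n with
  | zero => simp
  | succ n ih =>
    rw [mul_add_one, Finset.sum_range_succ, Finset.sum_range_succ, Finset.sum_range_succ, ih]
    ring

lemma one_le_div_mul_rpow_of_le {p H : ℝ} (hp : 1 < p) (hpH : p ≤ H) :
    1 ≤ H / p * ((p - 1) / (H - 1)) ^ ((p - 1) / p) := by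
  set a := (p - 1) / p
  set x := (H - 1) / (p - 1)
  have hp₀ : 0 < p := by linarith
  have hp₁ : p - 1 ≠ 0 := by linarith
  have hx : 0 < x := div_pos (by linarith) (by linarith)
  have ha : 1 - a = p⁻¹ := by simp only [a]; field_simp; ring
  have hamgm : x ^ a ≤ H / p := by
    have := Real.geom_mean_le_arith_mean2_weighted (w₁ := a) (w₂ := 1 - a) (p₁ := x) (p₂ := 1)
      (div_nonneg (by linarith) hp₀.le) (by rw [ha]; positivity) hx.le zero_le_one (by ring)
    rw [Real.one_rpow, mul_one, mul_one, ha] at this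
    refine this.trans_eq ?_
    simp only [a, x]
    field_simp
    ring
  rw [show (p - 1) / (H - 1) = x⁻¹ from (inv_div _ _).symm, Real.inv_rpow hx.le, ← div_eq_mul_inv,
    one_le_div (by positivity)]
  exact hamgm

lemma le_rpow_sub_one_div_sub_one {p Q : ℝ} (hp : 1 ≤ p) (hQ : 1 < Q) :
    p ≤ (Q ^ p - 1) / (Q - 1) := by
  have hbernoulli := one_add_mul_self_le_rpow_one_add (s := Q - 1) (by linarith) hp
  rw [add_sub_cancel] at hbernoulli
  rw [le_div_iff₀ (by linarith)]
  linarith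

lemma volume_dIcc (n k : ℕ) : volume (dIcc n k) = (2 ^ k)⁻¹ := by
  rw [dIcc, Real.volume_Icc, ← sub_mul, add_sub_cancel_left, one_mul, zpow_neg, zpow_natCast,
    ENNReal.ofReal_inv_of_pos (by positivity), ENNReal.ofReal_pow zero_le_two, ENNReal.ofReal_ofNat]

lemma dIcc_eq_closedBall (n k : ℕ) :
    dIcc n k = Metric.closedBall (((n : ℝ) + 2⁻¹) / 2 ^ k) ((2 ^ k)⁻¹ / 2) := by
  rw [Real.closedBall_eq_Icc, dIcc, zpow_neg, zpow_natCast]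
  congr 1 <;> ring

lemma mem_dIcc_floor {x : ℝ} (hx : 0 ≤ x) (k : ℕ) : x ∈ dIcc ⌊x * 2 ^ k⌋₊ k := by
  have h2 : (0 : ℝ) < 2 ^ k := by positivity
  rw [dIcc, zpow_neg, zpow_natCast, ← div_eq_mul_inv, ← div_eq_mul_inv, mem_Icc,
    div_le_iff₀ h2, le_div_iff₀ h2]
  exact ⟨Nat.floor_le (by positivity), (Nat.lt_floor_add_one _).le⟩

noncomputable def dyadicMeasure (n k : ℕ) : Measure ℝ :=
  (2 ^ k : ℝ≥0∞) • volume.restrict (dIcc n k)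

instance (n k : ℕ) : IsProbabilityMeasure (dyadicMeasure n k) :=
  ⟨by rw [dyadicMeasure, Measure.smul_apply, Measure.restrict_apply_univ, volume_dIcc, smul_eq_mul,
    ENNReal.mul_inv_cancel (by positivity) (by simp)]⟩

lemma avg_eq_integral (f : ℝ → ℝ) (n k : ℕ) : avg f n k = ∫ x, f x ∂dyadicMeasure n k := by
  rw [avg, dyadicMeasure, integral_smul_measure, zpow_natCast]
  simp

lemma avg_eq_setAverage (f : ℝ → ℝ) (n k : ℕ) : avg f n k = ⨍ x in dIcc n k, f x := by
  rw [avg_eq_integral, dyadicMeasure, average, Measure.restrict_apply_univ, volume_dIcc, inv_inv]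

lemma avg_eq_intervalIntegral (f : ℝ → ℝ) (n k : ℕ) :
    avg f n k = 2 ^ k * ∫ x in n / 2 ^ k..(n + 1) / 2 ^ k, f x := by
  have hle : (n : ℝ) / 2 ^ k ≤ (n + 1) / 2 ^ k := by gcongr; linarith
  rw [avg, intervalIntegral.integral_of_le hle, ← integral_Icc_eq_integral_Ioc, dIcc, zpow_natCast,
    zpow_neg, zpow_natCast, div_eq_mul_inv, div_eq_mul_inv]

lemma MeasureTheory.LocallyIntegrable.integrable_dyadicMeasure {f : ℝ → ℝ}
    (hf : LocallyIntegrable f volume) (n k : ℕ) : Integrable f (dyadicMeasure n k) :=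
  (hf.integrableOn_isCompact isCompact_Icc).smul_measure (by simp)

lemma ae_dyadicMeasure_of_ae {P : ℝ → Prop} (h : ∀ᵐ x, P x) (n k : ℕ) :
    ∀ᵐ x ∂dyadicMeasure n k, P x :=
  Measure.ae_smul_measure (ae_restrict_of_ae h) _

lemma ae_dyadicMeasure_mem (n k : ℕ) : ∀ᵐ x ∂dyadicMeasure n k, x ∈ dIcc n k :=
  Measure.ae_smul_measure (ae_restrict_mem measurableSet_Icc) _

lemma ae_dyadicMeasure_floor_eq (n k : ℕ) : ∀ᵐ x ∂dyadicMeasure n k, ⌊x * 2 ^ k⌋₊ = n := by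
  filter_upwards [ae_dyadicMeasure_mem n k,
    ae_dyadicMeasure_of_ae (Measure.ae_ne volume (((n : ℝ) + 1) * 2 ^ (-(k : ℤ)))) n k]
    with x ⟨hlo, hhi⟩ hne
  have h2 : (0 : ℝ) < 2 ^ k := by positivity
  rw [zpow_neg, zpow_natCast, ← div_eq_mul_inv] at hlo hhi hne
  rw [Nat.floor_eq_iff (mul_nonneg ((div_nonneg n.cast_nonneg h2.le).trans hlo) h2.le),
    ← div_le_iff₀ h2, ← lt_div_iff₀ h2]
  exact ⟨hlo, lt_of_le_of_ne hhi hne⟩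

lemma ae_dyadicMeasure_floor_eq_div (n k d : ℕ) :
    ∀ᵐ x ∂dyadicMeasure n (k + d), ⌊x * 2 ^ k⌋₊ = n / 2 ^ d := by
  filter_upwards [ae_dyadicMeasure_floor_eq n (k + d)] with x hx
  rw [← hx, ← Nat.floor_div_natCast, Nat.cast_pow, Nat.cast_ofNat, pow_add, ← mul_assoc,
    mul_div_cancel_right₀ _ (by positivity)]

lemma avg_nonneg {f : ℝ → ℝ} (hf : ∀ᵐ x, 0 ≤ f x) (n k : ℕ) : 0 ≤ avg f n k := by
  rw [avg_eq_integral]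
  exact integral_nonneg_of_ae (ae_dyadicMeasure_of_ae hf n k)

lemma avg_pos {f : ℝ → ℝ} (hf : LocallyIntegrable f volume) (hpos : ∀ᵐ x, 0 < f x) (n k : ℕ) :
    0 < avg f n k := by
  have hpos' := ae_dyadicMeasure_of_ae hpos n k
  rw [avg_eq_integral, integral_pos_iff_support_of_nonneg_ae (hpos'.mono fun _ h => h.le)
    (hf.integrable_dyadicMeasure n k), pos_iff_ne_zero, Ne, measure_eq_zero_iff_ae_notMem]
  intro hzero
  have : ∀ᵐ x ∂dyadicMeasure n k, False := by
    filter_upwards [hpos', hzero] with x hx hx' using hx' hx.ne'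
  simp only [eventually_false_iff_eq_bot, ae_eq_bot] at this
  exact IsProbabilityMeasure.ne_zero _ this

lemma rpow_avg_le_avg_rpow {w : ℝ → ℝ} {r : ℝ} (hr : 1 ≤ r) (hw : LocallyIntegrable w volume)
    (hwr : LocallyIntegrable (fun x => w x ^ r) volume) (hnonneg : ∀ᵐ x, 0 ≤ w x) (n k : ℕ) :
    avg w n k ^ r ≤ avg (fun x => w x ^ r) n k := by
  rw [avg_eq_integral, avg_eq_integral]
  refine (convexOn_rpow hr).map_integral_le ?_ isClosed_Ici (ae_dyadicMeasure_of_ae hnonneg n k)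
    (hw.integrable_dyadicMeasure n k) (hwr.integrable_dyadicMeasure n k)
  exact (Real.continuous_rpow_const (zero_le_one.trans hr)).continuousOn

lemma avg_eq_add_div_two {f : ℝ → ℝ} (hf : LocallyIntegrable f volume) (n k : ℕ) :
    avg f n k = (avg f (2 * n) (k + 1) + avg f (2 * n + 1) (k + 1)) / 2 := by
  have hint (a b : ℝ) : IntervalIntegrable f volume a b :=
    (hf.integrableOn_isCompact isCompact_uIcc).intervalIntegrable
  have e₁ : ((2 * n : ℕ) : ℝ) / 2 ^ (k + 1) = n / 2 ^ k := by push_cast; rw [pow_succ]; field_simp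
  have e₂ : (((2 * n + 1 : ℕ) : ℝ) + 1) / 2 ^ (k + 1) = (n + 1) / 2 ^ k := by
    push_cast; rw [pow_succ]; field_simp; ring
  have e₃ : ((2 * n : ℕ) : ℝ) + 1 = ((2 * n + 1 : ℕ) : ℝ) := by push_cast; ring
  simp only [avg_eq_intervalIntegral, e₁, e₂, e₃]
  rw [← intervalIntegral.integral_add_adjacent_intervals (hint _ _) (hint _ _), pow_succ]
  ring

-- `dIcc (n * 2 ^ j + m) (k + j)` for `m < 2 ^ j` are the `2 ^ j` dyadic subintervals of
-- `dIcc n k` of generation `j`.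
noncomputable def levelAvg (g : ℕ → ℕ → ℝ) (n k j : ℕ) : ℝ :=
  (∑ m ∈ Finset.range (2 ^ j), g (n * 2 ^ j + m) (k + j)) / 2 ^ j

@[simp]
lemma levelAvg_zero (g : ℕ → ℕ → ℝ) (n k : ℕ) : levelAvg g n k 0 = g n k := by
  simp [levelAvg]

lemma levelAvg_succ (g : ℕ → ℕ → ℝ) (n k j : ℕ) :
    levelAvg g n k (j + 1) =
      levelAvg (fun n k => (g (2 * n) (k + 1) + g (2 * n + 1) (k + 1)) / 2) n k j := by
  have hrange : 2 ^ (j + 1) = 2 * 2 ^ j := pow_succ' 2 j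
  have heven (m : ℕ) : n * (2 * 2 ^ j) + 2 * m = 2 * (n * 2 ^ j + m) := by ring
  have hodd (m : ℕ) : n * (2 * 2 ^ j) + (2 * m + 1) = 2 * (n * 2 ^ j + m) + 1 := by ring
  simp only [levelAvg, hrange, sum_range_two_mul, heven, hodd, ← add_assoc, ← Finset.sum_div,
    div_div, pow_succ']

lemma levelAvg_mono {g g' : ℕ → ℕ → ℝ} {n k j : ℕ}
    (h : ∀ m < 2 ^ j, g (n * 2 ^ j + m) (k + j) ≤ g' (n * 2 ^ j + m) (k + j)) :
    levelAvg g n k j ≤ levelAvg g' n k j := by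
  unfold levelAvg
  gcongr with m hm
  exact h m (Finset.mem_range.mp hm)

lemma levelAvg_congr {g g' : ℕ → ℕ → ℝ} {n k j : ℕ}
    (h : ∀ m < 2 ^ j, g (n * 2 ^ j + m) (k + j) = g' (n * 2 ^ j + m) (k + j)) :
    levelAvg g n k j = levelAvg g' n k j :=
  (levelAvg_mono fun m hm => (h m hm).le).antisymm (levelAvg_mono fun m hm => (h m hm).ge)

lemma levelAvg_avg {f : ℝ → ℝ} (hf : LocallyIntegrable f volume) (n k j : ℕ) :
    levelAvg (avg f) n k j = avg f n k := by
  induction j with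
  | zero => simp
  | succ j ih =>
    have hsplit : (fun n k => (avg f (2 * n) (k + 1) + avg f (2 * n + 1) (k + 1)) / 2) = avg f := by
      funext n k; exact (avg_eq_add_div_two hf n k).symm
    rw [levelAvg_succ, hsplit, ih]

def DyadicSupermean (g : ℕ → ℕ → ℝ) (n k : ℕ) : Prop :=
  ∀ j m : ℕ, m < 2 ^ j →
    (g (2 * (n * 2 ^ j + m)) (k + j + 1) + g (2 * (n * 2 ^ j + m) + 1) (k + j + 1)) / 2 ≤
      g (n * 2 ^ j + m) (k + j)

lemma DyadicSupermean.levelAvg_le {g : ℕ → ℕ → ℝ} {n k : ℕ} (hg : DyadicSupermean g n k)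
    (j : ℕ) : levelAvg g n k j ≤ g n k := by
  induction j with
  | zero => simp
  | succ j ih => exact (levelAvg_succ g n k j).trans_le ((levelAvg_mono (hg j)).trans ih)

-- `w ∈ RH_p^{δ,d}(J)` for `J = dIcc N K`.
def ReverseHolderOn (p δ : ℝ) (N K : ℕ) (w : ℝ → ℝ) : Prop :=
  ∀ j m : ℕ, m < 2 ^ j →
    avg (fun t => w t ^ p) (N * 2 ^ j + m) (K + j) ^ (1 / p) ≤ δ * avg w (N * 2 ^ j + m) (K + j)

-- `Db^d(w) ≤ Q`: `dIcc (n / 2) k` is the parent of `dIcc n (k + 1)`.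
def DyadicDoubling (Q : ℝ) (w : ℝ → ℝ) : Prop :=
  ∀ n k : ℕ, avg w (n / 2) k ≤ Q * avg w n (k + 1)

lemma ReverseHolderOn.avg_rpow_le {p δ : ℝ} {N K : ℕ} {w : ℝ → ℝ}
    (hw : ReverseHolderOn p δ N K w) (hp : 0 < p) (hδ : 0 ≤ δ) (hnonneg : ∀ᵐ x, 0 ≤ w x) :
    avg (fun x => w x ^ p) N K ≤ δ ^ p * avg w N K ^ p := by
  have h := hw 0 0 (by norm_num)
  simp only [pow_zero, mul_one, add_zero] at h
  have hy : 0 ≤ avg (fun x => w x ^ p) N K :=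
    avg_nonneg (hnonneg.mono fun x hx => Real.rpow_nonneg hx p) N K
  calc avg (fun x => w x ^ p) N K = (avg (fun x => w x ^ p) N K ^ (1 / p)) ^ p := by
        rw [← Real.rpow_mul hy, one_div_mul_cancel hp.ne', Real.rpow_one]
    _ ≤ (δ * avg w N K) ^ p := by gcongr
    _ = δ ^ p * avg w N K ^ p := Real.mul_rpow hδ (avg_nonneg hnonneg N K)

-- The dyadic conditional expectation of `w` at scale `k`; as `⌊·⌋₊` truncates, it is the constant
-- `avg w 0 k` on the negative half-line.
noncomputable def condAvg (w : ℝ → ℝ) (k : ℕ) (x : ℝ) : ℝ :=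
  avg w ⌊x * 2 ^ k⌋₊ k

lemma locallyIntegrable_comp_condAvg (g : ℝ → ℝ) (w : ℝ → ℝ) (k : ℕ) :
    LocallyIntegrable (fun x => g (condAvg w k x)) volume :=
  locallyIntegrable_comp_floor (fun m => g (avg w m k)) (by positivity)

lemma locallyIntegrable_condAvg (w : ℝ → ℝ) (k : ℕ) : LocallyIntegrable (condAvg w k) volume :=
  locallyIntegrable_comp_condAvg id w k

lemma avg_comp_condAvg (g : ℝ → ℝ) (w : ℝ → ℝ) (n k d : ℕ) :
    avg (fun x => g (condAvg w k x)) n (k + d) = g (avg w (n / 2 ^ d) k) := by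
  rw [avg_eq_integral, integral_congr_ae ((ae_dyadicMeasure_floor_eq_div n k d).mono fun x hx => by
    rw [condAvg, hx]), integral_const]
  simp

lemma avg_comp_condAvg_self (g : ℝ → ℝ) (w : ℝ → ℝ) (n k : ℕ) :
    avg (fun x => g (condAvg w k x)) n k = g (avg w n k) := by
  simpa using avg_comp_condAvg g w n k 0

lemma avg_condAvg_self (w : ℝ → ℝ) (n k : ℕ) : avg (condAvg w k) n k = avg w n k :=
  avg_comp_condAvg_self id w n k

lemma avg_condAvg_add (w : ℝ → ℝ) (n k d : ℕ) :
    avg (condAvg w k) n (k + d) = avg w (n / 2 ^ d) k :=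
  avg_comp_condAvg id w n k d

lemma avg_condAvg_of_le {w : ℝ → ℝ} (hw : LocallyIntegrable w volume) {j k : ℕ} (hjk : j ≤ k)
    (n : ℕ) : avg (condAvg w k) n j = avg w n j := by
  obtain ⟨d, rfl⟩ := exists_add_of_le hjk
  rw [← levelAvg_avg (locallyIntegrable_condAvg w _) n j d, ← levelAvg_avg hw n j d]
  exact levelAvg_congr fun m _ => avg_condAvg_self w _ (j + d)

lemma avg_rpow_condAvg_le_of_le {w : ℝ → ℝ} {r : ℝ} (hr : 1 ≤ r)
    (hw : LocallyIntegrable w volume) (hwr : LocallyIntegrable (fun x => w x ^ r) volume)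
    (hnonneg : ∀ᵐ x, 0 ≤ w x) {j k : ℕ} (hjk : j ≤ k) (n : ℕ) :
    avg (fun x => condAvg w k x ^ r) n j ≤ avg (fun x => w x ^ r) n j := by
  obtain ⟨d, rfl⟩ := exists_add_of_le hjk
  rw [← levelAvg_avg (locallyIntegrable_comp_condAvg (· ^ r) w _) n j d, ← levelAvg_avg hwr n j d]
  refine levelAvg_mono fun m _ => ?_
  rw [avg_comp_condAvg_self (· ^ r)]
  exact rpow_avg_le_avg_rpow hr hw hwr hnonneg _ _

lemma rpow_avg_le_avg_rpow_condAvg {w : ℝ → ℝ} {r : ℝ} (hr : 1 ≤ r)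
    (hw : LocallyIntegrable w volume) (hnonneg : ∀ᵐ x, 0 ≤ w x) {j k : ℕ} (hjk : j ≤ k) (n : ℕ) :
    avg w n j ^ r ≤ avg (fun x => condAvg w k x ^ r) n j := by
  rw [← avg_condAvg_of_le hw hjk]
  exact rpow_avg_le_avg_rpow hr (locallyIntegrable_condAvg w k)
    (locallyIntegrable_comp_condAvg (· ^ r) w k) (.of_forall fun _ => avg_nonneg hnonneg _ _) n j

lemma reverseHolderOn_condAvg {p δ : ℝ} {N K : ℕ} {w : ℝ → ℝ} (hw : ReverseHolderOn p δ N K w)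
    (hp : 1 ≤ p) (hδ : 1 ≤ δ) (hwi : LocallyIntegrable w volume)
    (hwp : LocallyIntegrable (fun x => w x ^ p) volume) (hpos : ∀ᵐ x, 0 < w x) (k : ℕ) :
    ReverseHolderOn p δ N K (condAvg w k) := by
  have hnonneg : ∀ᵐ x, 0 ≤ w x := hpos.mono fun _ h => h.le
  intro j m hm
  rcases le_total (K + j) k with hle | hle
  · calc avg (fun x => condAvg w k x ^ p) (N * 2 ^ j + m) (K + j) ^ (1 / p)
        ≤ avg (fun x => w x ^ p) (N * 2 ^ j + m) (K + j) ^ (1 / p) := by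
          gcongr
          · exact avg_nonneg (.of_forall fun x => Real.rpow_nonneg (avg_nonneg hnonneg _ _) p) _ _
          · exact avg_rpow_condAvg_le_of_le hp hwi hwp hnonneg hle _
      _ ≤ δ * avg w (N * 2 ^ j + m) (K + j) := hw j m hm
      _ = δ * avg (condAvg w k) (N * 2 ^ j + m) (K + j) := by rw [avg_condAvg_of_le hwi hle]
  · obtain ⟨d, hd⟩ := exists_add_of_le hle
    have hc := avg_nonneg hnonneg ((N * 2 ^ j + m) / 2 ^ d) k
    rw [hd, avg_comp_condAvg (· ^ p), avg_condAvg_add, one_div,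
      Real.rpow_rpow_inv hc (by positivity)]
    exact le_mul_of_one_le_left hc hδ

lemma dyadicDoubling_condAvg {Q : ℝ} {w : ℝ → ℝ} (hw : DyadicDoubling Q w) (hQ : 1 ≤ Q)
    (hwi : LocallyIntegrable w volume) (hnonneg : ∀ᵐ x, 0 ≤ w x) (k : ℕ) :
    DyadicDoubling Q (condAvg w k) := by
  intro n j
  rcases lt_or_ge j k with hlt | hle
  · rw [avg_condAvg_of_le hwi hlt.le, avg_condAvg_of_le hwi hlt]
    exact hw n j
  · obtain ⟨d, rfl⟩ := exists_add_of_le hle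
    rw [add_assoc, avg_condAvg_add, avg_condAvg_add, Nat.div_div_eq_div_mul, ← pow_succ']
    exact le_mul_of_one_le_left (avg_nonneg hnonneg _ _) hQ

lemma avg_rpow_condAvg_le {F : ℝ → ℝ → ℝ} {p q : ℝ} {w : ℝ → ℝ}
    (hwi : LocallyIntegrable w volume) (hpos : ∀ᵐ x, 0 < w x)
    (hF : ∀ c : ℝ, 0 < c → F c (c ^ p) ≥ c ^ q) {N K i : ℕ}
    (hsuper : DyadicSupermean (fun n k =>
      F (avg (condAvg w (K + i)) n k) (avg (fun x => condAvg w (K + i) x ^ p) n k)) N K) :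
    avg (fun x => condAvg w (K + i) x ^ q) N K ≤
      F (avg w N K) (avg (fun x => condAvg w (K + i) x ^ p) N K) := by
  rw [← levelAvg_avg (locallyIntegrable_comp_condAvg (· ^ q) w _) N K i,
    ← avg_condAvg_of_le hwi (Nat.le_add_right K i)]
  refine le_trans (levelAvg_mono fun m _ => ?_) (hsuper.levelAvg_le i)
  simp only [avg_comp_condAvg_self (· ^ q), avg_comp_condAvg_self (· ^ p), avg_condAvg_self]
  exact hF _ (avg_pos hwi hpos _ _)

lemma ae_tendsto_condAvg {w : ℝ → ℝ} (hw : LocallyIntegrable w volume) :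
    ∀ᵐ x, 0 ≤ x → Tendsto (fun k => condAvg w k x) atTop (𝓝 (w x)) := by
  filter_upwards [IsUnifLocDoublingMeasure.ae_tendsto_average volume hw 1] with x hx hx0
  have hrad : Tendsto (fun k : ℕ => ((2 : ℝ) ^ k)⁻¹ / 2) atTop (𝓝[>] 0) := by
    refine tendsto_nhdsWithin_iff.2 ⟨?_, .of_forall fun k => show (0 : ℝ) < _ by positivity⟩
    simpa using (tendsto_inv_atTop_zero.comp
      (tendsto_pow_atTop_atTop_of_one_lt one_lt_two)).div_const (2 : ℝ)
  have := hx (fun k : ℕ => ((⌊x * 2 ^ k⌋₊ : ℝ) + 2⁻¹) / 2 ^ k) _ hrad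
    (.of_forall fun k => by rw [one_mul, ← dIcc_eq_closedBall]; exact mem_dIcc_floor hx0 k)
  simpa only [condAvg, avg_eq_setAverage, dIcc_eq_closedBall] using this

lemma ae_tendsto_rpow_condAvg {w : ℝ → ℝ} (hw : LocallyIntegrable w volume)
    (hpos : ∀ᵐ x, 0 < w x) (r : ℝ) (N K : ℕ) :
    ∀ᵐ x ∂dyadicMeasure N K, Tendsto (fun i => condAvg w (K + i) x ^ r) atTop (𝓝 (w x ^ r)) := by
  filter_upwards [ae_dyadicMeasure_of_ae (ae_tendsto_condAvg hw) N K,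
    ae_dyadicMeasure_of_ae hpos N K, ae_dyadicMeasure_mem N K] with x hlim hx hmem
  have hx0 : 0 ≤ x := le_trans (by rw [zpow_neg, zpow_natCast]; positivity) hmem.1
  simp_rw [add_comm K]
  exact (Real.continuousAt_rpow_const _ r (Or.inl hx.ne')).tendsto.comp
    ((tendsto_add_atTop_iff_nat K).2 (hlim hx0))

lemma tendsto_avg_rpow_condAvg {p : ℝ} {w : ℝ → ℝ} (hp : 1 ≤ p) (hw : LocallyIntegrable w volume)
    (hwp : LocallyIntegrable (fun x => w x ^ p) volume) (hpos : ∀ᵐ x, 0 < w x) (N K : ℕ) :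
    Tendsto (fun i => avg (fun x => condAvg w (K + i) x ^ p) N K) atTop
      (𝓝 (avg (fun x => w x ^ p) N K)) := by
  have hnonneg : ∀ᵐ x, 0 ≤ w x := hpos.mono fun _ h => h.le
  simp only [avg_eq_integral]
  refine tendsto_integral_of_tendsto_ae_of_integral_le
    (fun i => (locallyIntegrable_comp_condAvg (· ^ p) w _).integrable_dyadicMeasure N K)
    (fun i => .of_forall fun x => Real.rpow_nonneg (avg_nonneg hnonneg _ _) p)
    (ae_tendsto_rpow_condAvg hw hpos p N K) fun i => ?_
  simp only [← avg_eq_integral]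
  exact avg_rpow_condAvg_le_of_le hp hw hwp hnonneg (Nat.le_add_right K i) N

lemma avg_rpow_le_of_tendsto {w : ℝ → ℝ} (hw : LocallyIntegrable w volume)
    (hpos : ∀ᵐ x, 0 < w x) (q : ℝ) {N K : ℕ} {b : ℕ → ℝ} {c : ℝ}
    (hb : ∀ i, avg (fun x => condAvg w (K + i) x ^ q) N K ≤ b i)
    (hbc : Tendsto b atTop (𝓝 c)) : avg (fun x => w x ^ q) N K ≤ c := by
  have hnonneg : ∀ᵐ x, 0 ≤ w x := hpos.mono fun _ h => h.le
  simp only [avg_eq_integral] at hb ⊢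
  exact integral_le_of_tendsto_ae
    (fun i => (locallyIntegrable_comp_condAvg (· ^ q) w _).integrable_dyadicMeasure N K)
    (fun i => .of_forall fun x => Real.rpow_nonneg (avg_nonneg hnonneg _ _) q)
    (ae_tendsto_rpow_condAvg hw hpos q N K) hb hbc

theorem stmt8_general (p δ Q H ε q : ℝ) (hp : 1 < p) (hδ : 1 < δ) (hQ : 2 ≤ Q)
    (hH : H = (Q ^ p - 1) / (Q - 1))
    (hε : ε = H / p * ((p - 1) / (H - 1)) ^ ((p - 1) / p) * δ)
    (N K : ℕ) (F : ℝ → ℝ → ℝ)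
    (hF_cont : ContinuousOn (fun z : ℝ × ℝ => F z.1 z.2)
      {z : ℝ × ℝ | 0 < z.1 ∧ z.1 ^ p ≤ z.2 ∧ z.2 ≤ ε ^ p * z.1 ^ p})
    (hFa : ∀ c : ℝ, 0 < c → F c (c ^ p) ≥ c ^ q)
    (hFb : ∀ w : ℝ → ℝ,
      LocallyIntegrable w volume →
      LocallyIntegrable (fun t => w t ^ p) volume →
      (∀ᵐ t ∂(volume : Measure ℝ), 0 < w t) →
      (∀ j m : ℕ, m < 2 ^ j →
        (avg (fun t => w t ^ p) (N * 2 ^ j + m) (K + j)) ^ (1 / p)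
          ≤ δ * avg w (N * 2 ^ j + m) (K + j)) →
      (∀ n k : ℕ, avg w (n / 2) k ≤ Q * avg w n (k + 1)) →
      ∀ j m : ℕ, m < 2 ^ j →
        F (avg w (N * 2 ^ j + m) (K + j)) (avg (fun t => w t ^ p) (N * 2 ^ j + m) (K + j))
          ≥ (F (avg w (2 * (N * 2 ^ j + m)) (K + j + 1))
                (avg (fun t => w t ^ p) (2 * (N * 2 ^ j + m)) (K + j + 1))
              + F (avg w (2 * (N * 2 ^ j + m) + 1) (K + j + 1))
                  (avg (fun t => w t ^ p) (2 * (N * 2 ^ j + m) + 1) (K + j + 1))) / 2) :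
    ∀ w : ℝ → ℝ,
      LocallyIntegrable w volume →
      LocallyIntegrable (fun t => w t ^ p) volume →
      (∀ᵐ t ∂(volume : Measure ℝ), 0 < w t) →
      (∀ j m : ℕ, m < 2 ^ j →
        (avg (fun t => w t ^ p) (N * 2 ^ j + m) (K + j)) ^ (1 / p)
          ≤ δ * avg w (N * 2 ^ j + m) (K + j)) →
      (∀ n k : ℕ, avg w (n / 2) k ≤ Q * avg w n (k + 1)) →
      avg (fun t => w t ^ q) N K ≤ F (avg w N K) (avg (fun t => w t ^ p) N K) := by
  intro w hw hwp hpos (hRH : ReverseHolderOn p δ N K w) (hDb : DyadicDoubling Q w)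
  have hnonneg : ∀ᵐ t, 0 ≤ w t := hpos.mono fun _ h => h.le
  have hK (i : ℕ) : K ≤ K + i := Nat.le_add_right K i
  have hδε : δ ≤ ε := by
    rw [hε]
    refine le_mul_of_one_le_left (by linarith) (one_le_div_mul_rpow_of_le hp ?_)
    exact hH ▸ le_rpow_sub_one_div_sub_one hp.le (by linarith)
  have hbound (i : ℕ) : avg (fun t => condAvg w (K + i) t ^ q) N K ≤
      F (avg w N K) (avg (fun t => condAvg w (K + i) t ^ p) N K) :=
    avg_rpow_condAvg_le hw hpos hFa <| hFb _ (locallyIntegrable_condAvg w _)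
      (locallyIntegrable_comp_condAvg (· ^ p) w _) (.of_forall fun _ => avg_pos hw hpos _ _)
      (reverseHolderOn_condAvg hRH hp.le hδ.le hw hwp hpos _)
      (dyadicDoubling_condAvg hDb (by linarith) hw hnonneg _)
  have hx : 0 < avg w N K := avg_pos hw hpos N K
  have hJ : avg (fun t => w t ^ p) N K ≤ ε ^ p * avg w N K ^ p :=
    (hRH.avg_rpow_le (by linarith) (by linarith) hnonneg).trans (by gcongr)
  have hlim : Tendsto (fun i => F (avg w N K) (avg (fun t => condAvg w (K + i) t ^ p) N K)) atTop
      (𝓝 (F (avg w N K) (avg (fun t => w t ^ p) N K))) :=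
    (hF_cont _ ⟨hx, rpow_avg_le_avg_rpow hp.le hw hwp hnonneg N K, hJ⟩).tendsto.comp
      (tendsto_nhdsWithin_iff.2 ⟨tendsto_const_nhds.prodMk_nhds
        (tendsto_avg_rpow_condAvg hp.le hw hwp hpos N K),
        .of_forall fun i => ⟨hx, rpow_avg_le_avg_rpow_condAvg hp.le hw hnonneg (hK i) N,
          (avg_rpow_condAvg_le_of_le hp.le hw hwp hnonneg (hK i) N).trans hJ⟩⟩)
  exact avg_rpow_le_of_tendsto hw hpos q hbound hlim

/-- Let `p>1`, `δ>1`, `Q≥2`, `q<0`, with `H = (Q^p−1)/(Q−1)` and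
`ε = (H/p)·((p−1)/(H−1))^((p−1)/p)·δ`.  Suppose `F` is continuous on
`Ω_ε = {(x,y) : x>0, x^p ≤ y ≤ ε^p x^p}` and satisfies:
(a) `F(c, c^p) ≥ c^q` for every `c>0`; and
(b) for every weight `w ∈ RH_p^{δ,d}(J)` with `Db^d(w) ≤ Q` and every `I ∈ D(J)` with
children `I^±`, `F(⟨w⟩_I, ⟨w^p⟩_I) ≥ ½[F(⟨w⟩_{I⁺},⟨w^p⟩_{I⁺}) + F(⟨w⟩_{I⁻},⟨w^p⟩_{I⁻})]`.
Then for every weight `w ∈ RH_p^{δ,d}(J)` with `Db^d(w) ≤ Q`,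
`⟨w^q⟩_J ≤ F(⟨w⟩_J, ⟨w^p⟩_J)`.  Here `J = [N·2^(-K), (N+1)·2^(-K)]`. -/
theorem stmt8 (p δ Q H ε q : ℝ) (hp : 1 < p) (hδ : 1 < δ) (hQ : 2 ≤ Q) (hq : q < 0)
    (hH : H = (Q ^ p - 1) / (Q - 1))
    (hε : ε = H / p * ((p - 1) / (H - 1)) ^ ((p - 1) / p) * δ)
    (N K : ℕ) (F : ℝ → ℝ → ℝ)
    (hF_cont : ContinuousOn (fun z : ℝ × ℝ => F z.1 z.2)
      {z : ℝ × ℝ | 0 < z.1 ∧ z.1 ^ p ≤ z.2 ∧ z.2 ≤ ε ^ p * z.1 ^ p})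
    (hFa : ∀ c : ℝ, 0 < c → F c (c ^ p) ≥ c ^ q)
    (hFb : ∀ w : ℝ → ℝ,
      LocallyIntegrable w volume →
      LocallyIntegrable (fun t => w t ^ p) volume →
      (∀ᵐ t ∂(volume : Measure ℝ), 0 < w t) →
      (∀ j m : ℕ, m < 2 ^ j →
        (avg (fun t => w t ^ p) (N * 2 ^ j + m) (K + j)) ^ (1 / p)
          ≤ δ * avg w (N * 2 ^ j + m) (K + j)) →
      (∀ n k : ℕ, avg w (n / 2) k ≤ Q * avg w n (k + 1)) →
      ∀ j m : ℕ, m < 2 ^ j →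
        F (avg w (N * 2 ^ j + m) (K + j)) (avg (fun t => w t ^ p) (N * 2 ^ j + m) (K + j))
          ≥ (F (avg w (2 * (N * 2 ^ j + m)) (K + j + 1))
                (avg (fun t => w t ^ p) (2 * (N * 2 ^ j + m)) (K + j + 1))
              + F (avg w (2 * (N * 2 ^ j + m) + 1) (K + j + 1))
                  (avg (fun t => w t ^ p) (2 * (N * 2 ^ j + m) + 1) (K + j + 1))) / 2) :
    ∀ w : ℝ → ℝ,
      LocallyIntegrable w volume →
      LocallyIntegrable (fun t => w t ^ p) volume →
      (∀ᵐ t ∂(volume : Measure ℝ), 0 < w t) →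
      (∀ j m : ℕ, m < 2 ^ j →
        (avg (fun t => w t ^ p) (N * 2 ^ j + m) (K + j)) ^ (1 / p)
          ≤ δ * avg w (N * 2 ^ j + m) (K + j)) →
      (∀ n k : ℕ, avg w (n / 2) k ≤ Q * avg w n (k + 1)) →
      avg (fun t => w t ^ q) N K ≤ F (avg w N K) (avg (fun t => w t ^ p) N K) :=
  stmt8_general p δ Q H ε q hp hδ hQ hH hε N K F hF_cont hFa hFb
end

section
/- Let p>1, δ>1, Q≥2, and let H := (Q^p−1)/(Q−1) and ε := (H/p)·((p−1)/(H−1))^{(p−1)/p}·δ. Let x^- = (x₁^-, x₂^-) and x^+ = (x₁^+, x₂^+) be points with 0 < x₁^- < x₁^+ and (x₁^±)^p ≤ x₂^± ≤ δ^p·(x₁^±)^p, and suppose the midpoint x = (x₁, x₂) := (x^- + x^+)/2 also satisfies x₁^p ≤ x₂ ≤ δ^p·x₁^p, together with the doubling-type constraint x₁ ≤ Q·x₁^-. Then every point (u,v) on the line segment joining x^- and x^+ satisfies u > 0 and u^p ≤ v ≤ ε^p·u^p; that is, the segment lies entirely inside Ω_ε := {(u,v): u,v>0, u^p ≤ v ≤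 ε^p u^p}. -/
open Real Set

/-- Tangent-line inequality: `1 + (u-1)H ≤ C^p u^p` for all `u ≥ 0`,
where `C = (H/p)((p-1)/(H-1))^((p-1)/p)`, `1 < p < H`. -/
lemma stmt11_tangent {p H : ℝ} (hp : 1 < p) (hpH : p < H) {u : ℝ} (hu : 0 ≤ u) :
    1 + (u - 1) * H ≤ (H / p * ((p - 1) / (H - 1)) ^ ((p - 1) / p)) ^ p * u ^ p := by
  have hp0 : (0:ℝ) < p := by linarith
  have hH1 : (1:ℝ) < H := by linarith
  have hA : (0:ℝ) < H / p := by positivity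
  have hBpos : (0:ℝ) < (p - 1) / (H - 1) := by
    apply div_pos <;> linarith
  set A := H / p with hAdef
  set B := (p - 1) / (H - 1) with hBdef
  have hCp : (A * B ^ ((p - 1) / p)) ^ p = A ^ p * B ^ (p - 1) := by
    rw [Real.mul_rpow hA.le (Real.rpow_nonneg hBpos.le _), ← Real.rpow_mul hBpos.le]
    congr 2
    field_simp
  set u₀ := p * (H - 1) / ((p - 1) * H) with hu₀def
  have hu₀ : 0 < u₀ := by
    apply div_pos (by nlinarith) (by nlinarith)
  have hnep : p ≠ 0 := by positivity
  have hneH : H ≠ 0 := by positivity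
  have hne1 : p - 1 ≠ 0 := by intro h; nlinarith
  have hne2 : H - 1 ≠ 0 := by intro h; nlinarith
  have hBu₀ : B * u₀ = A⁻¹ := by
    rw [hBdef, hu₀def, hAdef, inv_div]
    field_simp
  set E := A ^ p * B ^ (p - 1) with hEdef
  have hEpos : 0 < E := by positivity
  have e1 : E * u₀ ^ (p - 1) = A := by
    rw [hEdef, mul_assoc, ← Real.mul_rpow hBpos.le hu₀.le, hBu₀,
      Real.inv_rpow hA.le, ← Real.rpow_neg hA.le, ← Real.rpow_add hA,
      show p + -(p - 1) = 1 by ring, Real.rpow_one]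
  have e3 : u₀ ^ p = u₀ ^ (p - 1) * u₀ := by
    nth_rewrite 1 [show p = (p - 1) + 1 by ring]
    rw [Real.rpow_add hu₀, Real.rpow_one]
  have hAu₀ : A * u₀ = (H - 1) / (p - 1) := by
    rw [hAdef, hu₀def]
    field_simp
  -- Bernoulli
  have hber : 1 + p * (u / u₀ - 1) ≤ (1 + (u / u₀ - 1)) ^ p :=
    one_add_mul_self_le_rpow_one_add (by
      have : 0 ≤ u / u₀ := div_nonneg hu hu₀.le
      linarith) hp.le
  have h1 : (1 : ℝ) + (u / u₀ - 1) = u / u₀ := by ring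
  rw [h1, Real.div_rpow hu hu₀.le] at hber
  have hu₀p : (0:ℝ) < u₀ ^ p := Real.rpow_pos_of_pos hu₀ p
  have hmul := mul_le_mul_of_nonneg_left hber (by positivity : (0:ℝ) ≤ E * u₀ ^ p)
  have hrhs : E * u₀ ^ p * (u ^ p / u₀ ^ p) = E * u ^ p := by
    field_simp
  rw [hrhs] at hmul
  have hlhs : E * u₀ ^ p * (1 + p * (u / u₀ - 1)) = 1 + (u - 1) * H := by
    rw [e3]
    have key : E * (u₀ ^ (p - 1) * u₀) * (1 + p * (u / u₀ - 1))
        = (E * u₀ ^ (p - 1)) * (u₀ + p * u - p * u₀) := by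
      field_simp
      ring
    rw [key, e1]
    have key2 : A * (u₀ + p * u - p * u₀) = A * u₀ * (1 - p) + A * p * u := by ring
    rw [key2, hAu₀, hAdef]
    field_simp
    ring
  rw [hlhs] at hmul
  rw [hCp]
  exact hmul

/-- Secant inequality from convexity: for `1 ≤ r ≤ Q`, `r^p ≤ 1 + (r-1)(Q^p-1)/(Q-1)`. -/
lemma stmt11_secant {p Q r : ℝ} (hp : 1 < p) (hQ1 : 1 < Q) (hr1 : 1 ≤ r) (hrQ : r ≤ Q) :
    r ^ p ≤ 1 + (r - 1) * ((Q ^ p - 1) / (Q - 1)) := by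
  have hQ0 : (0:ℝ) < Q - 1 := by linarith
  set s := (r - 1) / (Q - 1) with hsdef
  have hs0 : 0 ≤ s := div_nonneg (by linarith) hQ0.le
  have hr : r = (1 - s) * 1 + s * Q := by
    rw [hsdef]; field_simp; ring
  have ha' : (0:ℝ) ≤ 1 - s := by
    rw [sub_nonneg, hsdef, div_le_one hQ0]; linarith
  have hab1 : (1 - s) + s = 1 := by ring
  have hconv := (convexOn_rpow hp.le).2 (mem_Ici.2 zero_le_one)
    (mem_Ici.2 (by linarith : (0:ℝ) ≤ Q)) ha' hs0 hab1
  simp only [smul_eq_mul] at hconv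
  rw [← hr, Real.one_rpow] at hconv
  calc r ^ p ≤ (1 - s) * 1 + s * Q ^ p := hconv
    _ = 1 + (r - 1) * ((Q ^ p - 1) / (Q - 1)) := by
        rw [hsdef]; field_simp; ring

/-- `p < H = (Q^p-1)/(Q-1)` for `Q > 1`. -/
lemma stmt11_H_gt {p Q : ℝ} (hp : 1 < p) (hQ1 : 1 < Q) : p < (Q ^ p - 1) / (Q - 1) := by
  have hQ0 : (0:ℝ) < Q - 1 := by linarith
  have hber := one_add_mul_self_lt_rpow_one_add
    (show (-1:ℝ) ≤ Q - 1 by linarith) (ne_of_gt hQ0) hp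
  rw [show (1:ℝ) + (Q - 1) = Q by ring] at hber
  rw [lt_div_iff₀ hQ0]
  linarith

/-- Key segment lemma. -/
lemma stmt11_key {p Q H C a b s : ℝ} (hp : 1 < p) (hQ : 2 ≤ Q)
    (hH : H = (Q ^ p - 1) / (Q - 1))
    (hC : C = H / p * ((p - 1) / (H - 1)) ^ ((p - 1) / p))
    (ha : 0 < a) (hab : a ≤ b) (hbQ : b ≤ Q * a) (hs0 : 0 ≤ s) (hs1 : s ≤ 1) :
    (1 - s) * a ^ p + s * b ^ p ≤ C ^ p * ((1 - s) * a + s * b) ^ p := by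
  have hQ1 : (1:ℝ) < Q := by linarith
  have hpH : p < H := hH ▸ stmt11_H_gt hp hQ1
  have hb : (0:ℝ) < b := lt_of_lt_of_le ha hab
  set r := b / a with hrdef
  have hr0 : 0 ≤ r := by positivity
  have hr1 : 1 ≤ r := (one_le_div ha).2 hab
  have hrQ : r ≤ Q := by rw [hrdef, div_le_iff₀ ha]; linarith
  set u := 1 - s + s * r with hudef
  have hu0 : (0:ℝ) ≤ u := by nlinarith
  have hsec := stmt11_secant hp hQ1 hr1 hrQ
  rw [← hH] at hsec
  have htan := stmt11_tangent hp hpH hu0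
  have step1 : 1 - s + s * r ^ p ≤ 1 + (u - 1) * H := by
    have h2 := mul_le_mul_of_nonneg_left hsec hs0
    have heq : (u - 1) * H = s * (1 + (r - 1) * H) - s := by rw [hudef]; ring
    linarith
  have hbar : b = a * r := by rw [hrdef]; field_simp
  have hstep : 1 - s + s * r ^ p ≤ C ^ p * u ^ p := by
    rw [hC]; exact step1.trans htan
  calc (1 - s) * a ^ p + s * b ^ p
      = a ^ p * (1 - s + s * r ^ p) := by
        rw [hbar, Real.mul_rpow ha.le hr0]; ring
    _ ≤ a ^ p * (C ^ p * u ^ p) :=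
        mul_le_mul_of_nonneg_left hstep (Real.rpow_nonneg ha.le p)
    _ = C ^ p * ((1 - s) * a + s * b) ^ p := by
        rw [show (1 - s) * a + s * b = a * u by rw [hbar, hudef]; ring,
          Real.mul_rpow ha.le hu0]
        ring

/-- Let `p>1`, `δ>1`, `Q≥2`, `H = (Q^p−1)/(Q−1)`,
`ε = (H/p)·((p−1)/(H−1))^((p−1)/p)·δ`.  Let `x⁻ = (x₁⁻, x₂⁻)` and `x⁺ = (x₁⁺, x₂⁺)` with
`0 < x₁⁻ < x₁⁺` and `(x₁^±)^p ≤ x₂^± ≤ δ^p(x₁^±)^p`, and suppose the midpoint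
`x = (x₁,x₂) = (x⁻+x⁺)/2` also satisfies `x₁^p ≤ x₂ ≤ δ^p x₁^p` together with the
doubling-type constraint `x₁ ≤ Q·x₁⁻`.  Then every point `(u,v)` on the segment joining
`x⁻` and `x⁺` satisfies `u > 0` and `u^p ≤ v ≤ ε^p·u^p`, i.e. lies in `Ω_ε`. -/
theorem stmt11 (p δ Q H ε : ℝ) (hp : 1 < p) (hδ : 1 < δ) (hQ : 2 ≤ Q)
    (hH : H = (Q ^ p - 1) / (Q - 1))
    (hε : ε = H / p * ((p - 1) / (H - 1)) ^ ((p - 1) / p) * δ)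
    (xm1 xm2 xp1 xp2 x1 x2 : ℝ)
    (hxm1_pos : 0 < xm1) (hlt : xm1 < xp1)
    (hm_lo : xm1 ^ p ≤ xm2) (hm_hi : xm2 ≤ δ ^ p * xm1 ^ p)
    (hp_lo : xp1 ^ p ≤ xp2) (hp_hi : xp2 ≤ δ ^ p * xp1 ^ p)
    (hx1 : x1 = (xm1 + xp1) / 2) (hx2 : x2 = (xm2 + xp2) / 2)
    (hx_lo : x1 ^ p ≤ x2) (hx_hi : x2 ≤ δ ^ p * x1 ^ p)
    (hdoub : x1 ≤ Q * xm1) :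
    ∀ t ∈ Set.Icc (0 : ℝ) 1,
      0 < (1 - t) * xm1 + t * xp1 ∧
      ((1 - t) * xm1 + t * xp1) ^ p ≤ (1 - t) * xm2 + t * xp2 ∧
      (1 - t) * xm2 + t * xp2 ≤ ε ^ p * ((1 - t) * xm1 + t * xp1) ^ p := by
  intro t ht
  obtain ⟨ht0, ht1⟩ := ht
  have hxp1 : 0 < xp1 := hxm1_pos.trans hlt
  have hu : 0 < (1 - t) * xm1 + t * xp1 := by nlinarith
  refine ⟨hu, ?_, ?_⟩
  · have hconv := (convexOn_rpow hp.le).2 (mem_Ici.2 hxm1_pos.le) (mem_Ici.2 hxp1.le)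
      (by linarith : (0:ℝ) ≤ 1 - t) ht0 (by ring)
    simp only [smul_eq_mul] at hconv
    calc ((1 - t) * xm1 + t * xp1) ^ p ≤ (1 - t) * xm1 ^ p + t * xp1 ^ p := hconv
      _ ≤ (1 - t) * xm2 + t * xp2 := by
          have h1 := mul_le_mul_of_nonneg_left hm_lo (by linarith : (0:ℝ) ≤ 1 - t)
          have h2 := mul_le_mul_of_nonneg_left hp_lo ht0
          linarith
  · set C := H / p * ((p - 1) / (H - 1)) ^ ((p - 1) / p) with hCdef
    have hpH : p < H := hH ▸ stmt11_H_gt hp (by linarith)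
    have hH0 : (0:ℝ) < H := by linarith
    have hC0 : 0 ≤ C := by
      rw [hCdef]
      have h1 : (0:ℝ) ≤ H / p := by positivity
      have h2 : (0:ℝ) ≤ ((p - 1) / (H - 1)) ^ ((p - 1) / p) :=
        Real.rpow_nonneg (by apply div_nonneg <;> linarith) _
      exact mul_nonneg h1 h2
    have hδ0 : (0:ℝ) < δ := by linarith
    have hεp : ε ^ p = C ^ p * δ ^ p := by
      rw [hε]
      exact Real.mul_rpow hC0 hδ0.le
    have hδp : (0:ℝ) ≤ δ ^ p := Real.rpow_nonneg hδ0.le p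
    have hx1m : xm1 ≤ x1 := by rw [hx1]; linarith
    have hx1p : x1 ≤ xp1 := by rw [hx1]; linarith
    rcases le_or_gt t (1/2) with hhalf | hhalf
    · have hs0 : (0:ℝ) ≤ 2*t := by linarith
      have hs1 : 2*t ≤ 1 := by linarith
      have hkey := stmt11_key hp hQ hH hCdef hxm1_pos hx1m hdoub hs0 hs1
      calc (1 - t) * xm2 + t * xp2
          = (1 - 2*t) * xm2 + (2*t) * x2 := by rw [hx2]; ring
        _ ≤ (1 - 2*t) * (δ^p * xm1^p) + (2*t) * (δ^p * x1^p) := by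
            have h1 := mul_le_mul_of_nonneg_left hm_hi (by linarith : (0:ℝ) ≤ 1 - 2*t)
            have h2 := mul_le_mul_of_nonneg_left hx_hi hs0
            linarith
        _ = δ^p * ((1 - 2*t) * xm1^p + (2*t) * x1^p) := by ring
        _ ≤ δ^p * (C^p * ((1 - 2*t) * xm1 + (2*t) * x1)^p) :=
            mul_le_mul_of_nonneg_left hkey hδp
        _ = ε^p * ((1 - t) * xm1 + t * xp1)^p := by
            rw [hεp,
              show (1 - 2*t) * xm1 + (2*t) * x1 = (1 - t) * xm1 + t * xp1 by rw [hx1]; ring]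
            ring
    · have hs0 : (0:ℝ) ≤ 2*t - 1 := by linarith
      have hs1 : 2*t - 1 ≤ 1 := by linarith
      have hx1pos : 0 < x1 := lt_of_lt_of_le hxm1_pos hx1m
      have hbQ : xp1 ≤ Q * x1 := by
        rw [hx1]
        nlinarith [mul_nonneg (by linarith : (0:ℝ) ≤ Q - 2)
          (by linarith : (0:ℝ) ≤ xm1 + xp1)]
      have hkey := stmt11_key hp hQ hH hCdef hx1pos hx1p hbQ hs0 hs1
      calc (1 - t) * xm2 + t * xp2
          = (1 - (2*t - 1)) * x2 + (2*t - 1) * xp2 := by rw [hx2]; ring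
        _ ≤ (1 - (2*t-1)) * (δ^p * x1^p) + (2*t-1) * (δ^p * xp1^p) := by
            have h1 := mul_le_mul_of_nonneg_left hx_hi (by linarith : (0:ℝ) ≤ 1 - (2*t-1))
            have h2 := mul_le_mul_of_nonneg_left hp_hi hs0
            linarith
        _ = δ^p * ((1 - (2*t-1)) * x1^p + (2*t-1) * xp1^p) := by ring
        _ ≤ δ^p * (C^p * ((1 - (2*t-1)) * x1 + (2*t-1) * xp1)^p) :=
            mul_le_mul_of_nonneg_left hkey hδp
        _ = ε^p * ((1 - t) * xm1 + t * xp1)^p := by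
            rw [hεp,
              show (1 - (2*t-1)) * x1 + (2*t-1) * xp1 = (1 - t) * xm1 + t * xp1 by
                rw [hx1]; ring]
            ring
end

section
/- Let p>1, δ>0, a>0 and H>1, and set ε := (H/p)·((p−1)/(H−1))^{(p−1)/p}·δ. Consider the line L through the point (a, δ^p a^p) with slope δ^p a^{p−1} H, i.e. L = {(x,y): y = δ^p a^p + δ^p a^{p−1} H (x − a)}. Then for every (x,y) ∈ L with x>0 and y≥0 one has y^{1/p} ≤ ε·x; equivalently, the maximum of the function f(x,y) = y^{1/p} x^{-1} over such points equals ε, attained at x = a·p(H−1)/(H(p−1)). -/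
/-!
With `q = (H - 1)/(p - 1)` and `x₀ = a p q / H`, one has `ε x₀ = δ a q^{1/p}`, and the line `L`
is exactly the tangent line at `x₀` of the convex curve `y = (ε x)^p`: both pass through
`(x₀, δ^p a^p q)` with slope `δ^p a^{p-1} H`. By Bernoulli's inequality the curve lies above
its tangent line, so `y ≤ (ε x)^p` on `L`, with equality at `x₀`.
-/

open Real

theorem rpow_tangent_line_le {p s t : ℝ} (hp : 1 ≤ p) (hs : 0 < s) (ht : 0 ≤ t) :
    s ^ p * (1 + p * (t / s - 1)) ≤ t ^ p := by
  have hts : 0 ≤ t / s := div_nonneg ht hs.le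
  have bernoulli := one_add_mul_self_le_rpow_one_add (s := t / s - 1) (by linarith) hp
  rw [add_sub_cancel] at bernoulli
  calc s ^ p * (1 + p * (t / s - 1)) ≤ s ^ p * (t / s) ^ p := by gcongr
    _ = t ^ p := by rw [← mul_rpow hs.le hts, mul_div_cancel₀ _ hs.ne']

theorem tangent_point_rpow_eq {p δ a H : ℝ} (hp : 1 < p) (hδ : 0 ≤ δ) (ha : 0 ≤ a)
    (hH : 1 < H) :
    (H / p * ((p - 1) / (H - 1)) ^ ((p - 1) / p) * δ * (a * p * (H - 1) / (H * (p - 1)))) ^ p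
      = δ ^ p * a ^ p * ((H - 1) / (p - 1)) := by
  have hp₀ : p ≠ 0 := by positivity
  have hp₁ : p - 1 ≠ 0 := by linarith
  have hH₀ : H ≠ 0 := by positivity
  have hH₁ : H - 1 ≠ 0 := by linarith
  set q := (H - 1) / (p - 1) with hq_def
  have hq : 0 < q := div_pos (by linarith) (by linarith)
  have hpow : ((p - 1) / (H - 1)) ^ ((p - 1) / p) = q ^ (1 / p) / q := by
    rw [← inv_div, inv_rpow hq.le, show (p - 1) / p = 1 - 1 / p by field_simp,
      rpow_sub hq, rpow_one]
    field_simp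
  have hbase : H / p * ((p - 1) / (H - 1)) ^ ((p - 1) / p) * δ *
      (a * p * (H - 1) / (H * (p - 1))) = δ * a * q ^ (1 / p) := by
    rw [hpow, hq_def]
    field_simp
  rw [hbase, mul_rpow (by positivity) (by positivity), mul_rpow hδ ha, one_div,
    rpow_inv_rpow hq.le hp₀]

theorem line_eq_tangent_line {p δ a H : ℝ} (hp₀ : p ≠ 0) (hp₁ : p ≠ 1) (ha : a ≠ 0)
    (hH₁ : H ≠ 1) (x : ℝ) :
    δ ^ p * a ^ p + δ ^ p * a ^ (p - 1) * H * (x - a)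
      = δ ^ p * a ^ p * ((H - 1) / (p - 1)) *
        (1 + p * (x / (a * p * (H - 1) / (H * (p - 1))) - 1)) := by
  have : p - 1 ≠ 0 := sub_ne_zero.mpr hp₁
  have : H - 1 ≠ 0 := sub_ne_zero.mpr hH₁
  rw [rpow_sub_one ha]
  field_simp
  ring

/-- Let `p>1`, `δ>0`, `a>0`, `H>1`, and
`ε = (H/p)·((p−1)/(H−1))^((p−1)/p)·δ`.  Consider the line `L` through `(a, δ^p a^p)` with
slope `δ^p a^(p−1) H`.  Then every `(x,y) ∈ L` with `x>0`, `y≥0` satisfies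
`y^(1/p) ≤ ε·x`, and equality holds at `x = a·p(H−1)/(H(p−1))`; that is, the maximum of
`f(x,y) = y^(1/p)·x⁻¹` over such points equals `ε`, attained at that point. -/
theorem stmt12 (p δ a H ε : ℝ) (hp : 1 < p) (hδ : 0 < δ) (ha : 0 < a) (hH : 1 < H)
    (hε : ε = H / p * ((p - 1) / (H - 1)) ^ ((p - 1) / p) * δ) :
    (∀ x y : ℝ, 0 < x → 0 ≤ y →
      y = δ ^ p * a ^ p + δ ^ p * a ^ (p - 1) * H * (x - a) → y ^ (1 / p) ≤ ε * x) ∧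
    (δ ^ p * a ^ p + δ ^ p * a ^ (p - 1) * H * (a * p * (H - 1) / (H * (p - 1)) - a))
        ^ (1 / p)
      = ε * (a * p * (H - 1) / (H * (p - 1))) := by
  have hp₀ : 0 < p := by linarith
  have hH₀ : 0 < H := by linarith
  have hε₀ : 0 < ε := by
    have : 0 < (p - 1) / (H - 1) := div_pos (by linarith) (by linarith)
    rw [hε]; positivity
  set x₀ := a * p * (H - 1) / (H * (p - 1))
  have hx₀ : 0 < x₀ :=
    div_pos (mul_pos (mul_pos ha hp₀) (by linarith)) (mul_pos hH₀ (by linarith))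
  have hline (x : ℝ) : δ ^ p * a ^ p + δ ^ p * a ^ (p - 1) * H * (x - a)
      = (ε * x₀) ^ p * (1 + p * (ε * x / (ε * x₀) - 1)) := by
    rw [hε, tangent_point_rpow_eq hp hδ.le ha.le hH, ← hε, mul_div_mul_left _ _ hε₀.ne']
    exact line_eq_tangent_line hp₀.ne' hp.ne' ha.ne' hH.ne' x
  constructor
  · intro x y hx hy hy_eq
    rw [one_div, rpow_inv_le_iff_of_pos hy (by positivity) hp₀, hy_eq, hline x]
    exact rpow_tangent_line_le hp.le (by positivity) (by positivity)
  · rw [hline x₀, div_self (by positivity), sub_self, mul_zero, add_zero, mul_one, one_div,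
      rpow_rpow_inv (by positivity) hp₀.ne']
end
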